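/- Let S be an m-dimensional vector space of C^{m-1} functions on [a,b] containing the constants, and suppose that DS = {F' : F ∈ S} is an (m-1)-dimensional space in which every nonzero element has at most m-2 zeros in [a,b] counted with multiplicity. Let f_ℓ ∈ S (ℓ = 2,...,m) satisfy D^r f_ℓ(a) = 0 for r = 0,...,ℓ-2 and f_ℓ(b) = 1, D^r f_ℓ(b) = 0 for r = 1,...,m-ℓ. Then each f_ℓ is strictly increasing on [a,b], and f_ℓ' > 0 on (a,b). -/

import Mathlib

/-!
By the mean value theorem `f_ℓ'` is positive somewhere, so the zero bound applies to it. Since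
`f_ℓ'` vanishes to order `ℓ - 2` at `a` and to order `m - ℓ` at `b`, these zeros already
account for `m - 2` of the at most `m - 2` allowed, so `f_ℓ'` has no zero in `(a, b)`. Being
continuous and positive at one point, it is positive on all of `(a, b)`.
-/

def VanishesTo (F : ℝ → ℝ) (x : ℝ) (μ : ℕ) : Prop :=
  ∀ r < μ, iteratedDeriv r F x = 0

def AtMostZeros (m : ℕ) (I : Set ℝ) (F : ℝ → ℝ) : Prop :=
  ∀ (h : ℕ) (τ : Fin h → ℝ) (μ : Fin h → ℕ),
    Function.Injective τ → (∀ j, τ j ∈ I) → (∀ j, 1 ≤ μ j ∧ μ j ≤ m) →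
    (∑ j, μ j) = m → ¬ (∀ j, VanishesTo F (τ j) (μ j))

lemma VanishesTo.deriv {F : ℝ → ℝ} {x : ℝ} {n : ℕ}
    (h : ∀ r, 1 ≤ r → r ≤ n → iteratedDeriv r F x = 0) : VanishesTo (deriv F) x n := by
  intro r hr
  rw [← iteratedDeriv_succ']
  exact h (r + 1) (by omega) (by omega)

/-- Points of multiplicity zero may be included in a zero configuration. -/
lemma AtMostZeros.not_forall_vanishesTo {M : ℕ} {I : Set ℝ} {g : ℝ → ℝ}
    (hg : AtMostZeros M I g) {h : ℕ} (τ : Fin h → ℝ) (μ : Fin h → ℕ)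
    (hτ : Function.Injective τ) (hτI : ∀ j, τ j ∈ I) (hμ : ∑ j, μ j = M) :
    ¬ ∀ j, VanishesTo g (τ j) (μ j) := by
  intro hvan
  let e := (Fintype.equivFin {j // μ j ≠ 0}).symm
  have hsum : ∑ i, μ (e i) = M := by
    rw [Equiv.sum_comp e (fun j => μ j), ← hμ, ← Finset.sum_subtype {j | μ j ≠ 0} (by simp),
      Finset.sum_filter_ne_zero]
  refine hg _ (fun i => τ (e i)) (fun i => μ (e i)) (hτ.comp (Subtype.val_injective.comp
    e.injective)) (fun i => hτI _) (fun i => ⟨Nat.one_le_iff_ne_zero.mpr (e i).2, ?_⟩) hsum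
    (fun i => hvan _)
  exact hμ ▸ Finset.single_le_sum (fun j _ => Nat.zero_le (μ j)) (Finset.mem_univ _)

lemma AtMostZeros.ne_zero_of_vanishesTo {M : ℕ} {a b : ℝ} {g : ℝ → ℝ}
    (hg : AtMostZeros M (Set.Icc a b) g) {p q : ℕ} (hpq : p + 1 + q = M)
    (ha : VanishesTo g a p) (hb : VanishesTo g b q) {x : ℝ} (hx : x ∈ Set.Ioo a b) :
    g x ≠ 0 := by
  obtain ⟨hax, hxb⟩ := hx
  intro hx0
  refine hg.not_forall_vanishesTo ![a, x, b] ![p, 1, q] ?_ ?_ ?_ ?_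
  · intro i j hij
    fin_cases i <;> fin_cases j <;> simp_all <;> linarith
  · intro j
    fin_cases j <;> simp [hax.le, hxb.le, (hax.trans hxb).le]
  · simp [Fin.sum_univ_three, ← hpq]
  · intro j
    fin_cases j
    · exact ha
    · simpa [VanishesTo] using hx0
    · exact hb

lemma IsPreconnected.pos_of_ne_zero {s : Set ℝ} (hs : IsPreconnected s) {g : ℝ → ℝ}
    (hg : ContinuousOn g s) {c : ℝ} (hc : c ∈ s) (hgc : 0 < g c)
    (hne : ∀ x ∈ s, g x ≠ 0) {x : ℝ} (hx : x ∈ s) : 0 < g x := by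
  by_contra! hle
  obtain ⟨y, hy, hy0⟩ := hs.intermediate_value hx hc hg ⟨hle, hgc.le⟩
  exact hne y hy hy0

theorem stmt_7_general (m : ℕ) (a b : ℝ) (hab : a < b)
    (S : Submodule ℝ (ℝ → ℝ))
    (hsm : ∀ F ∈ S, ContDiff ℝ (m - 1 : ℕ) F)
    (hDSEC : ∀ F ∈ S, (∃ x ∈ Set.Icc a b, deriv F x ≠ 0) →
      AtMostZeros (m - 1) (Set.Icc a b) (deriv F))
    (f : ℕ → ℝ → ℝ)
    (hfS : ∀ ℓ, 2 ≤ ℓ → ℓ ≤ m → f ℓ ∈ S)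
    (ha0 : ∀ ℓ, 2 ≤ ℓ → ℓ ≤ m → ∀ r ≤ ℓ - 2, iteratedDeriv r (f ℓ) a = 0)
    (hb1 : ∀ ℓ, 2 ≤ ℓ → ℓ ≤ m → f ℓ b = 1)
    (hb0 : ∀ ℓ, 2 ≤ ℓ → ℓ ≤ m → ∀ r, 1 ≤ r → r ≤ m - ℓ → iteratedDeriv r (f ℓ) b = 0) :
    ∀ ℓ, 2 ≤ ℓ → ℓ ≤ m →
      StrictMonoOn (f ℓ) (Set.Icc a b) ∧ ∀ x ∈ Set.Ioo a b, 0 < deriv (f ℓ) x := by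
  intro ℓ hℓ2 hℓm
  have hF : ContDiff ℝ (m - 1 : ℕ) (f ℓ) := hsm _ (hfS ℓ hℓ2 hℓm)
  have hdiff : Differentiable ℝ (f ℓ) := hF.differentiable (by norm_cast; omega)
  have hFa : f ℓ a = 0 := by simpa using ha0 ℓ hℓ2 hℓm 0 (Nat.zero_le _)
  obtain ⟨c, hc, hc'⟩ := exists_deriv_eq_slope (f ℓ) hab hdiff.continuous.continuousOn
    hdiff.differentiableOn
  have hcpos : 0 < deriv (f ℓ) c := by
    rw [hc', hFa, hb1 ℓ hℓ2 hℓm]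
    exact div_pos one_pos (sub_pos.mpr hab) |>.trans_eq (by ring)
  have hzeros := hDSEC _ (hfS ℓ hℓ2 hℓm) ⟨c, Set.Ioo_subset_Icc_self hc, hcpos.ne'⟩
  have hva : VanishesTo (deriv (f ℓ)) a (ℓ - 2) :=
    .deriv fun r _ hr => ha0 ℓ hℓ2 hℓm r (by omega)
  have hvb : VanishesTo (deriv (f ℓ)) b (m - ℓ) := .deriv (hb0 ℓ hℓ2 hℓm)
  have hpos : ∀ x ∈ Set.Ioo a b, 0 < deriv (f ℓ) x := fun x hx =>
    isPreconnected_Ioo.pos_of_ne_zero (hF.continuous_deriv (by norm_cast; omega)).continuousOn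
      hc hcpos (fun y hy => hzeros.ne_zero_of_vanishesTo (by omega) hva hvb hy) hx
  refine ⟨strictMonoOn_of_deriv_pos (convex_Icc a b) hdiff.continuous.continuousOn ?_, hpos⟩
  simpa only [interior_Icc] using hpos

theorem stmt_7 (m : ℕ) (hm : 2 ≤ m) (a b : ℝ) (hab : a < b)
    (S : Submodule ℝ (ℝ → ℝ))
    (hdim : Module.finrank ℝ S = m)
    (hsm : ∀ F ∈ S, ContDiff ℝ (m - 1 : ℕ) F)
    (h1 : (fun _ => (1 : ℝ)) ∈ S)
    (hDSdim : Module.finrank ℝ ↥(Submodule.span ℝ (deriv '' (S : Set (ℝ → ℝ)))) = m - 1)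
    (hDSEC : ∀ F ∈ S, (∃ x ∈ Set.Icc a b, deriv F x ≠ 0) →
      AtMostZeros (m - 1) (Set.Icc a b) (deriv F))
    (f : ℕ → ℝ → ℝ)
    (hfS : ∀ ℓ, 2 ≤ ℓ → ℓ ≤ m → f ℓ ∈ S)
    (ha0 : ∀ ℓ, 2 ≤ ℓ → ℓ ≤ m → ∀ r ≤ ℓ - 2, iteratedDeriv r (f ℓ) a = 0)
    (hb1 : ∀ ℓ, 2 ≤ ℓ → ℓ ≤ m → f ℓ b = 1)
    (hb0 : ∀ ℓ, 2 ≤ ℓ → ℓ ≤ m → ∀ r, 1 ≤ r → r ≤ m - ℓ → iteratedDeriv r (f ℓ) b = 0) :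
    ∀ ℓ, 2 ≤ ℓ → ℓ ≤ m →
      StrictMonoOn (f ℓ) (Set.Icc a b) ∧ ∀ x ∈ Set.Ioo a b, 0 < deriv (f ℓ) x :=
  stmt_7_general m a b hab S hsm hDSEC f hfS ha0 hb1 hb0
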